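/- arXiv:1906.09163 — 6 statements merged into one kernel-verified Lean document; each statement's English description precedes it below -/
import Mathlib

section
/- Let A be a nonempty set and S a finite set. An n-dimensional relation R ⊆ A^(2^S) is (S)-reflexive if and only if R is closed under all the operations refl_i^j for (i,j) ∈ S × 2, and R is (S)-symmetric if and only if R is closed under the operations sym_i for every i ∈ S. -/
universe u v

structure Signature : Type 1 where
  ops : Type
  arity : ops → ℕ

class Alg (σ : Signature) (A : Type u) : Type u where
  interp : ∀ o : σ.ops, (Fin (σ.arity o) → A) → A

/-- A labeled `S`-dimensional cube with vertices labeled by elements of `A`. -/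
abbrev Cube (S : Type v) (A : Type u) : Type (max u v) := (S → Bool) → A

section Defs

variable {A : Type u} {B : Type u} {S : Type v}

def Quasireflexive (R : Set (B × B)) : Prop :=
  ∀ a b : B, (a, b) ∈ R → (a, a) ∈ R ∧ (b, b) ∈ R

def SymmRel (R : Set (B × B)) : Prop := ∀ a b : B, (a, b) ∈ R → (b, a) ∈ R

def TransRel (R : Set (B × B)) : Prop :=
  ∀ a b c : B, (a, b) ∈ R → (b, c) ∈ R → (a, c) ∈ R

def face [DecidableEq S] (i : S) (b : Bool) (γ : Cube S A) : Cube {x : S // x ≠ i} A :=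
  fun f => γ fun j => if h : j = i then b else f ⟨j, h⟩

def facesRel [DecidableEq S] (i : S) (R : Set (Cube S A)) :
    Set (Cube {x : S // x ≠ i} A × Cube {x : S // x ≠ i} A) :=
  {p | ∃ γ ∈ R, p = (face i false γ, face i true γ)}

def SRefl [DecidableEq S] (R : Set (Cube S A)) : Prop := ∀ i : S, Quasireflexive (facesRel i R)
def SSymm [DecidableEq S] (R : Set (Cube S A)) : Prop := ∀ i : S, SymmRel (facesRel i R)
def STrans [DecidableEq S] (R : Set (Cube S A)) : Prop := ∀ i : S, TransRel (facesRel i R)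

def glue (i : S) (a b : Cube {x : S // x ≠ i} A) : Cube S A :=
  fun f => if f i then b (fun j => f j.val) else a (fun j => f j.val)

def reflMap [DecidableEq S] (i : S) (b : Bool) (γ : Cube S A) : Cube S A :=
  glue i (face i b γ) (face i b γ)

def symMap [DecidableEq S] (i : S) (γ : Cube S A) : Cube S A :=
  glue i (face i true γ) (face i false γ)

def cut (Q : Set S) [DecidablePred (· ∈ Q)] (γ : Cube S A) :
    Cube {x : S // x ∈ Q} (Cube {x : S // x ∉ Q} A) :=
  fun f g => γ fun j => if h : j ∈ Q then f ⟨j, h⟩ else g ⟨j, h⟩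

def cutProj (Q : Set S) [DecidablePred (· ∈ Q)] (R : Set (Cube S A))
    (f : {x : S // x ∈ Q} → Bool) : Set (Cube {x : S // x ∉ Q} A) :=
  (fun γ => cut Q γ f) '' R

variable (σ : Signature)

def CompatCube [Alg σ A] (R : Set (Cube S A)) : Prop :=
  ∀ (o : σ.ops) (γ : Fin (σ.arity o) → Cube S A), (∀ k, γ k ∈ R) →
    (fun f => Alg.interp (A := A) o fun k => γ k f) ∈ R

def CompatRel [Alg σ A] (θ : Set (A × A)) : Prop :=
  ∀ (o : σ.ops) (x y : Fin (σ.arity o) → A), (∀ k, (x k, y k) ∈ θ) →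
    (Alg.interp (A := A) o x, Alg.interp (A := A) o y) ∈ θ

def IsCongruence [Alg σ A] (θ : Set (A × A)) : Prop :=
  (∀ a : A, (a, a) ∈ θ) ∧ SymmRel θ ∧ TransRel θ ∧ CompatRel σ θ

def IsTolerance [Alg σ A] [DecidableEq S] (R : Set (Cube S A)) : Prop :=
  CompatCube σ R ∧ SRefl R ∧ SSymm R

def IsHCongruence [Alg σ A] [DecidableEq S] (R : Set (Cube S A)) : Prop :=
  IsTolerance σ R ∧ STrans R

def subalgGen [Alg σ A] (X : Set (Cube S A)) : Set (Cube S A) :=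
  ⋂₀ {R : Set (Cube S A) | CompatCube σ R ∧ X ⊆ R}

def tolGen [Alg σ A] [DecidableEq S] (X : Set (Cube S A)) : Set (Cube S A) :=
  ⋂₀ {R : Set (Cube S A) | IsTolerance σ R ∧ X ⊆ R}

def congGen [Alg σ A] [DecidableEq S] (X : Set (Cube S A)) : Set (Cube S A) :=
  ⋂₀ {R : Set (Cube S A) | IsHCongruence σ R ∧ X ⊆ R}

def cubeAt (i : S) (p : A × A) : Cube S A := fun f => bif f i then p.2 else p.1

def cubeSet (i : S) (θ : Set (A × A)) : Set (Cube S A) := cubeAt i '' θ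

def MRel [Alg σ A] [DecidableEq S] (θ : S → Set (A × A)) : Set (Cube S A) :=
  tolGen σ (⋃ i : S, cubeSet i (θ i))

def DeltaRel [Alg σ A] [DecidableEq S] (θ : S → Set (A × A)) : Set (Cube S A) :=
  congGen σ (⋃ i : S, cubeSet i (θ i))

def rectRel [DecidableEq S] (θ : S → Set (A × A)) : Set (Cube S A) :=
  {γ | ∀ (i : S) (f : {x : S // x ≠ i} → Bool), (face i false γ f, face i true γ f) ∈ θ i}

def dirClosure [DecidableEq S] (i : S) (R : Set (Cube S A)) : Set (Cube S A) :=
  {γ | Relation.TransGen (fun a b : Cube {x : S // x ≠ i} A => (a, b) ∈ facesRel i R)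
      (face i false γ) (face i true γ)}

def Centrality [DecidableEq S] [Fintype S] (δ : Set (A × A)) (i : S)
    (R : Set (Cube S A)) : Prop :=
  ¬ ∃ γ ∈ R, Nat.card {f : {x : S // x ≠ i} → Bool //
      (face i false γ f, face i true γ f) ∈ δ} = 2 ^ (Fintype.card S - 1) - 1

end Defs

def finMod (n : ℕ) [NeZero n] (j : ℕ) : Fin n :=
  ⟨j % n, Nat.mod_lt _ (Nat.pos_of_ne_zero (NeZero.ne n))⟩

def tcSeq {A : Type u} {n : ℕ} [NeZero n] (Y : Set (Cube (Fin n) A)) :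
    ℕ → Set (Cube (Fin n) A)
  | 0 => dirClosure (finMod n 0) Y
  | j + 1 => dirClosure (finMod n (j + 1)) (tcSeq Y j)

def tcClosure {A : Type u} {n : ℕ} [NeZero n] (Y : Set (Cube (Fin n) A)) :
    Set (Cube (Fin n) A) := ⋃ j : ℕ, tcSeq Y j

def lastIdx (n : ℕ) [NeZero n] : Fin n :=
  ⟨n - 1, Nat.sub_lt (Nat.pos_of_ne_zero (NeZero.ne n)) Nat.one_pos⟩

def tcComm (σ : Signature) {A : Type u} [Alg σ A] (n : ℕ) [NeZero n]
    (θ : Fin n → Set (A × A)) : Set (A × A) :=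
  ⋂₀ {δ : Set (A × A) | IsCongruence σ δ ∧ Centrality δ (lastIdx n) (MRel σ θ)}

def hComm (σ : Signature) {A : Type u} [Alg σ A] (n : ℕ) [NeZero n]
    (θ : Fin n → Set (A × A)) : Set (A × A) :=
  ⋂₀ {δ : Set (A × A) | IsCongruence σ δ ∧ Centrality δ (lastIdx n) (DeltaRel σ θ)}

inductive Term (σ : Signature) (k : ℕ) : Type
  | var : Fin k → Term σ k
  | app : (o : σ.ops) → (Fin (σ.arity o) → Term σ k) → Term σ k

def Term.eval {σ : Signature} {k : ℕ} {A : Type u} [Alg σ A] :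
    Term σ k → (Fin k → A) → A
  | .var i, v => v i
  | .app o ts, v => Alg.interp (A := A) o fun j => (ts j).eval v

def IsTaylorAlg (σ : Signature) (A : Type u) [Alg σ A] : Prop :=
  ∃ (m : ℕ) (t : Term σ (m + 1)),
    (∀ a : A, t.eval (fun _ => a) = a) ∧
    ∀ e : Fin (m + 1), ∃ u v : Fin (m + 1) → Bool, u e = false ∧ v e = true ∧
      ∀ x y : A, t.eval (fun i => bif u i then y else x)
               = t.eval (fun i => bif v i then y else x)

open Classical in
noncomputable def comCube {A : Type u} (n : ℕ) (x y : A) : Cube (Fin n) A :=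
  fun f => if ∀ i, f i = true then y else x

def iSupported {A : Type u} {S : Type v} [DecidableEq S] (i : S) (γ : Cube S A)
    (x y : A) : Prop :=
  face i false γ (fun _ => true) = x ∧ face i true γ (fun _ => true) = y ∧
  ∀ f : {z : S // z ≠ i} → Bool, f ≠ (fun _ => true) →
    face i false γ f = face i true γ f

def sqCube {A : Type u} (a b c d : A) : Cube (Fin 2) A :=
  fun f => if f 0 then (if f 1 then d else c) else (if f 1 then b else a)

def lcs (σ : Signature) {A : Type u} [Alg σ A] (θ : Set (A × A)) : ℕ → Set (A × A)
  | 0 => θ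
  | n + 1 => tcComm σ 2 ![θ, lcs σ θ n]

def diagRel (A : Type u) : Set (A × A) := {p : A × A | p.1 = p.2}

lemma face_glue {A : Type u} {S : Type v} [DecidableEq S] (i : S) (b : Bool)
    (x y : Cube {s : S // s ≠ i} A) :
    face i b (glue i x y) = bif b then y else x := by
  funext f
  simp only [face, glue]
  cases b <;> simp <;> congr 1 <;> funext j <;>
    · rcases j with ⟨j, hj⟩; simp [hj]

lemma glue_face {A : Type u} {S : Type v} [DecidableEq S] (i : S) (γ : Cube S A) :
    glue i (face i false γ) (face i true γ) = γ := by
  funext f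
  simp only [face, glue]
  by_cases h : f i = true <;> simp [h] <;> congr 1 <;> funext j <;>
    · by_cases hj : j = i <;> simp [hj] <;> subst hj <;> simp [h]

/-- `R` is (S)-reflexive iff closed under all `reflMap i j`, and
(S)-symmetric iff closed under all `symMap i`. -/
theorem stmt1 {A : Type u} {S : Type v} [Nonempty A] [Fintype S] [DecidableEq S]
    (R : Set (Cube S A)) :
    (SRefl R ↔ ∀ (i : S) (j : Bool), ∀ γ ∈ R, reflMap i j γ ∈ R) ∧
    (SSymm R ↔ ∀ i : S, ∀ γ ∈ R, symMap i γ ∈ R) := by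
  constructor
  · constructor
    · intro h i j γ hγ
      obtain ⟨h0, h1⟩ := h i (face i false γ) (face i true γ) ⟨γ, hγ, rfl⟩
      cases j
      · obtain ⟨δ, hδ, hδe⟩ := h0
        have : δ = reflMap i false γ := by
          rw [← glue_face i δ]
          have e0 : face i false δ = face i false γ := (congrArg Prod.fst hδe).symm
          have e1 : face i true δ = face i false γ := (congrArg Prod.snd hδe).symm
          rw [e0, e1]; rfl
        rwa [← this]
      · obtain ⟨δ, hδ, hδe⟩ := h1
        have : δ = reflMap i true γ := by
          rw [← glue_face i δ]
          have e0 : face i false δ = face i true γ := (congrArg Prod.fst hδe).symm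
          have e1 : face i true δ = face i true γ := (congrArg Prod.snd hδe).symm
          rw [e0, e1]; rfl
        rwa [← this]
    · intro h i a b ⟨γ, hγ, he⟩
      have ha : a = face i false γ := congrArg Prod.fst he
      have hb : b = face i true γ := congrArg Prod.snd he
      constructor
      · exact ⟨reflMap i false γ, h i false γ hγ, by
          rw [ha]; unfold reflMap; rw [face_glue, face_glue]; rfl⟩
      · exact ⟨reflMap i true γ, h i true γ hγ, by
          rw [hb]; unfold reflMap; rw [face_glue, face_glue]; rfl⟩
  · constructor
    · intro h i γ hγ
      obtain ⟨δ, hδ, hδe⟩ := h i (face i false γ) (face i true γ) ⟨γ, hγ, rfl⟩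
      have : δ = symMap i γ := by
        rw [← glue_face i δ]
        have e0 : face i false δ = face i true γ := (congrArg Prod.fst hδe).symm
        have e1 : face i true δ = face i false γ := (congrArg Prod.snd hδe).symm
        rw [e0, e1]; rfl
      rwa [← this]
    · intro h i a b ⟨γ, hγ, he⟩
      have ha : a = face i false γ := congrArg Prod.fst he
      have hb : b = face i true γ := congrArg Prod.snd he
      exact ⟨symMap i γ, h i γ hγ, by
        rw [ha, hb]; unfold symMap; rw [face_glue, face_glue]; rfl⟩
end

section
/- Let A be a nonempty set, S a finite set, Q ⊆ S, and R ⊆ A^(2^S). Under the cube-of-cubes decomposition cut_Q : A^(2^S) → (A^(2^(S∖Q)))^(2^Q): (1) if R is (S)-symmetric then cut_Q(R) is (Q)-symmetric; (2) if R is (S)-reflexive then cut_Q(R) is (Q)-reflexive; (3) if R is (S)-transitive then cut_Q(R) is (Q)-transitive. -/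
universe u v

section Stmt2Aux

variable {A : Type u} {S : Type v} [DecidableEq S]

def rho (Q : Set S) [DecidablePred (· ∈ Q)] (i : {x : S // x ∈ Q})
    (a : Cube {x : S // x ≠ i.val} A) :
    Cube {x : {x : S // x ∈ Q} // x ≠ i} (Cube {x : S // x ∉ Q} A) :=
  fun f g => a fun j =>
    if h : j.val ∈ Q then f ⟨⟨j.val, h⟩, fun e => j.2 (congrArg Subtype.val e)⟩
    else g ⟨j.val, h⟩

lemma rho_inj (Q : Set S) [DecidablePred (· ∈ Q)] (i : {x : S // x ∈ Q}) :
    Function.Injective (rho (A := A) Q i) := by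
  intro a a' h
  funext x
  have hx := congrFun (congrFun h
    (fun k => x ⟨k.1.1, fun e => k.2 (Subtype.ext e)⟩))
    (fun k => x ⟨k.1, fun e => k.2 (e ▸ i.2)⟩)
  simp only [rho] at hx
  have hm : (fun j : {y : S // y ≠ i.val} =>
      if h : j.val ∈ Q then
        (fun k : {x : {x : S // x ∈ Q} // x ≠ i} => x ⟨k.1.1, fun e => k.2 (Subtype.ext e)⟩)
          ⟨⟨j.val, h⟩, fun e => j.2 (congrArg Subtype.val e)⟩
      else (fun k : {x : S // x ∉ Q} => x ⟨k.1, fun e => k.2 (e ▸ i.2)⟩) ⟨j.val, h⟩) = x := by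
    funext j
    by_cases hq : j.val ∈ Q <;> simp [hq]
  rw [hm] at hx
  exact hx

lemma face_cut (Q : Set S) [DecidablePred (· ∈ Q)] (i : {x : S // x ∈ Q}) (b : Bool)
    (γ : Cube S A) : face i b (cut Q γ) = rho Q i (face i.val b γ) := by
  funext f g
  simp only [face, cut, rho]
  congr 1
  funext j
  by_cases hq : j ∈ Q
  · by_cases hi : j = i.val
    · have : (⟨j, hq⟩ : {x : S // x ∈ Q}) = i := Subtype.ext hi
      simp [hq, hi, this]
    · have : (⟨j, hq⟩ : {x : S // x ∈ Q}) ≠ i := fun e => hi (congrArg Subtype.val e)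
      simp [hq, hi, this]
  · have hi : j ≠ i.val := fun e => hq (e ▸ i.2)
    simp [hq, hi]

lemma mem_facesRel_cut (Q : Set S) [DecidablePred (· ∈ Q)] (i : {x : S // x ∈ Q})
    (R : Set (Cube S A)) (p) :
    p ∈ facesRel i (cut Q '' R) ↔
      ∃ γ ∈ R, p = (rho Q i (face i.val false γ), rho Q i (face i.val true γ)) := by
  constructor
  · rintro ⟨δ, ⟨γ, hγ, rfl⟩, rfl⟩
    exact ⟨γ, hγ, by rw [face_cut, face_cut]⟩
  · rintro ⟨γ, hγ, rfl⟩
    exact ⟨cut Q γ, ⟨γ, hγ, rfl⟩, by rw [face_cut, face_cut]⟩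

end Stmt2Aux

/-- the cube-of-cubes decomposition `cut Q` preserves (S)-symmetry,
(S)-reflexivity and (S)-transitivity, giving the corresponding (Q)-properties. -/
theorem stmt2 {A : Type u} {S : Type v} [Nonempty A] [Fintype S] [DecidableEq S]
    (Q : Set S) [DecidablePred (· ∈ Q)] (R : Set (Cube S A)) :
    (SSymm R → SSymm (cut Q '' R)) ∧
    (SRefl R → SRefl (cut Q '' R)) ∧
    (STrans R → STrans (cut Q '' R)) := by
  refine ⟨?_, ?_, ?_⟩
  · intro hR i x y hxy
    obtain ⟨γ, hγ, hp⟩ := (mem_facesRel_cut Q i R _).1 hxy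
    obtain ⟨hx, hy⟩ := Prod.mk.injEq .. ▸ hp
    obtain ⟨γ', hγ', hp'⟩ := hR i.val _ _ ⟨γ, hγ, rfl⟩
    obtain ⟨h0, h1⟩ := Prod.mk.injEq .. ▸ hp'
    exact (mem_facesRel_cut Q i R _).2
      ⟨γ', hγ', by rw [← h0, ← h1, hx, hy]⟩
  · intro hR i x y hxy
    obtain ⟨γ, hγ, hp⟩ := (mem_facesRel_cut Q i R _).1 hxy
    obtain ⟨hx, hy⟩ := Prod.mk.injEq .. ▸ hp
    obtain ⟨⟨γ₁, hγ₁, hp₁⟩, ⟨γ₂, hγ₂, hp₂⟩⟩ := hR i.val _ _ ⟨γ, hγ, rfl⟩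
    obtain ⟨h10, h11⟩ := Prod.mk.injEq .. ▸ hp₁
    obtain ⟨h20, h21⟩ := Prod.mk.injEq .. ▸ hp₂
    constructor
    · exact (mem_facesRel_cut Q i R _).2 ⟨γ₁, hγ₁, by rw [← h10, ← h11, hx]⟩
    · exact (mem_facesRel_cut Q i R _).2 ⟨γ₂, hγ₂, by rw [← h20, ← h21, hy]⟩
  · intro hR i x y z hxy hyz
    obtain ⟨γ, hγ, hp⟩ := (mem_facesRel_cut Q i R _).1 hxy
    obtain ⟨hx, hy⟩ := Prod.mk.injEq .. ▸ hp
    obtain ⟨γ', hγ', hp'⟩ := (mem_facesRel_cut Q i R _).1 hyz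
    obtain ⟨hy', hz⟩ := Prod.mk.injEq .. ▸ hp'
    have hb : face i.val true γ = face i.val false γ' :=
      rho_inj Q i (by rw [← hy, hy'])
    have h2 : (face i.val true γ, face i.val true γ') ∈ facesRel i.val R := by
      rw [hb]; exact ⟨γ', hγ', rfl⟩
    have := hR i.val _ _ _ ⟨γ, hγ, rfl⟩ h2
    obtain ⟨γ'', hγ'', hp''⟩ := this
    obtain ⟨h0, h1⟩ := Prod.mk.injEq .. ▸ hp''
    exact (mem_facesRel_cut Q i R _).2 ⟨γ'', hγ'', by rw [← h0, ← h1, hx, hz]⟩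
end

section
/- Let A be a nonempty set, S a finite set, and R ⊆ A^(2^S) an (S)-reflexive relation. For any γ ∈ R, Q ⊆ S, and f ∈ 2^Q, the cube α ∈ A^(2^S) defined by cut_Q(α)_g = cut_Q(γ)_f for every g ∈ 2^Q belongs to R. -/
universe u v

section Aux
variable {A : Type u} {S : Type v} [DecidableEq S]

lemma cube_eq_glue (i : S) (γ : Cube S A) :
    γ = glue i (face i false γ) (face i true γ) := by
  funext h
  unfold glue face
  cases hhi : h i
  · simp only [hhi, Bool.false_eq_true, if_false]
    congr 1; funext j
    by_cases hj : j = i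
    · subst hj; simp [hhi]
    · simp [hj]
  · simp only [hhi, if_true]
    congr 1; funext j
    by_cases hj : j = i
    · subst hj; simp [hhi]
    · simp [hj]

lemma reflMap_mem {R : Set (Cube S A)} (hR : SRefl R) {γ : Cube S A} (hγ : γ ∈ R)
    (i : S) (b : Bool) : reflMap i b γ ∈ R := by
  have hmem : (face i false γ, face i true γ) ∈ facesRel i R := ⟨γ, hγ, rfl⟩
  have hq := hR i _ _ hmem
  cases b with
  | false =>
    obtain ⟨δ, hδ, hpe⟩ := hq.1
    have h0 : face i false δ = face i false γ := congrArg Prod.fst hpe.symm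
    have h1 : face i true δ = face i false γ := congrArg Prod.snd hpe.symm
    have : δ = reflMap i false γ := by rw [reflMap, ← h0]; nth_rewrite 2 [h0.trans h1.symm]; exact cube_eq_glue i δ
    rwa [this] at hδ
  | true =>
    obtain ⟨δ, hδ, hpe⟩ := hq.2
    have h0 : face i false δ = face i true γ := congrArg Prod.fst hpe.symm
    have h1 : face i true δ = face i true γ := congrArg Prod.snd hpe.symm
    have : δ = reflMap i true γ := by rw [reflMap, ← h0]; nth_rewrite 2 [h0.trans h1.symm]; exact cube_eq_glue i δ
    rwa [this] at hδ

lemma reflMap_apply (i : S) (b : Bool) (γ : Cube S A) (h : S → Bool) :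
    reflMap i b γ h = γ (fun j => if j = i then b else h j) := by
  unfold reflMap glue face
  by_cases hi : h i <;> simp [hi] <;> congr 1 <;> funext j <;> by_cases hj : j = i <;> simp [hj]

lemma multiRefl_mem {R : Set (Cube S A)} (hR : SRefl R) (f' : S → Bool)
    (T : Finset S) : ∀ γ ∈ R, (fun h => γ (fun j => if j ∈ T then f' j else h j)) ∈ R := by
  classical
  induction T using Finset.induction_on with
  | empty =>
    intro γ hγ
    have : (fun h => γ (fun j => if j ∈ (∅ : Finset S) then f' j else h j)) = γ := by
      funext h; simp
    rwa [this]
  | @insert i T hiT ih =>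
    intro γ hγ
    have h1 := ih (reflMap i (f' i) γ) (reflMap_mem hR hγ i (f' i))
    have : (fun h : S → Bool => reflMap i (f' i) γ (fun j => if j ∈ T then f' j else h j))
         = (fun h : S → Bool => γ (fun j => if j ∈ insert i T then f' j else h j)) := by
      funext h
      rw [reflMap_apply]
      congr 1; funext j
      by_cases hj : j = i
      · subst hj; simp
      · simp [hj, Finset.mem_insert]
    rwa [this] at h1
end Aux

/-- if `R` is (S)-reflexive, `γ ∈ R`, `Q ⊆ S` and `f ∈ 2^Q`, then the cube
`α` whose `Q`-cuts are all equal to `cut_Q(γ)_f` belongs to `R`. -/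
theorem stmt3 {A : Type u} {S : Type v} [Nonempty A] [Fintype S] [DecidableEq S]
    (R : Set (Cube S A)) (hR : SRefl R) (γ : Cube S A) (hγ : γ ∈ R)
    (Q : Set S) [DecidablePred (· ∈ Q)] (f : {x : S // x ∈ Q} → Bool)
    (α : Cube S A) (hα : ∀ g : {x : S // x ∈ Q} → Bool, cut Q α g = cut Q γ f) :
    α ∈ R := by
  classical
  let f' : S → Bool := fun j => if h : j ∈ Q then f ⟨j, h⟩ else false
  have key := multiRefl_mem hR f' Q.toFinset γ hγ
  have : (fun h => γ (fun j => if j ∈ Q.toFinset then f' j else h j)) = α := by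
    funext h
    have hh := congrFun (hα (fun x => h x.val)) (fun x => h x.val)
    unfold cut at hh
    have hl : α h = γ (fun j => if hj : j ∈ Q then f ⟨j, hj⟩ else h j) := by
      rw [← hh]; congr 1; funext j; by_cases hj : j ∈ Q <;> simp [hj]
    rw [hl]; congr 1; funext j
    by_cases hj : j ∈ Q <;> simp [hj, f', Set.mem_toFinset]
  rwa [this] at key
end

section
/- Let A be a nonempty set, S a finite set, Q ⊆ S, f ∈ 2^Q, and R ⊆ A^(2^S). Then: (1) if R is (S)-symmetric, the projection cut_Q(R)_f = {cut_Q(γ)_f : γ ∈ R} is (S∖Q)-symmetric; (2) if R is (S)-reflexive, cut_Q(R)_f is (S∖Q)-reflexive; (3) if R is both (S)-transitive and (S)-reflexive, then cut_Q(R)_f is (S∖Q)-transitive. -/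
universe u v

section Aux

variable {A : Type u} {S : Type v} [DecidableEq S]

lemma force_one {R : Set (Cube S A)} (hR : SRefl R) (j : S) (b : Bool)
    {γ : Cube S A} (hγ : γ ∈ R) :
    (fun g => γ (fun k => if k = j then b else g k)) ∈ R := by
  have hmem : (face j false γ, face j true γ) ∈ facesRel j R := ⟨γ, hγ, rfl⟩
  have hq := hR j _ _ hmem
  have h2 : (face j b γ, face j b γ) ∈ facesRel j R := by
    cases b
    · exact hq.1
    · exact hq.2
  obtain ⟨δ, hδ, heq⟩ := h2
  have h0 : face j false δ = face j b γ := (congrArg Prod.fst heq).symm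
  have h1 : face j true δ = face j b γ := (congrArg Prod.snd heq).symm
  have hkey : (fun g => γ (fun k => if k = j then b else g k)) = δ := by
    funext g
    have hface : face j (g j) δ = face j b γ := by
      cases hgj : g j
      · exact h0
      · exact h1
    have hδg : δ g = face j (g j) δ (fun k : {x : S // x ≠ j} => g k.val) := by
      show δ g = δ _
      congr 1
      funext k
      by_cases hk : k = j
      · subst hk; simp
      · simp [hk]
    rw [hδg, hface]
    show γ _ = γ _
    congr 1
  rwa [hkey]

lemma force_finset {R : Set (Cube S A)} (hR : SRefl R) (v : S → Bool)
    {γ : Cube S A} (hγ : γ ∈ R) (T : Finset S) :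
    (fun g => γ (fun k => if k ∈ T then v k else g k)) ∈ R := by
  induction T using Finset.induction_on with
  | empty => simpa using hγ
  | @insert j T hj ih =>
    have h' := force_one hR j (v j) ih
    refine Set.mem_of_eq_of_mem ?_ h'
    funext g
    congr 1
    funext k
    by_cases hT : k ∈ T
    · simp [hT, Finset.mem_insert]
    · by_cases hkj : k = j
      · subst hkj; simp [hT]
      · simp [hT, hkj, Finset.mem_insert]

lemma force_Q [Fintype S] (Q : Set S) [DecidablePred (· ∈ Q)]
    {R : Set (Cube S A)} (hR : SRefl R) (f : {x : S // x ∈ Q} → Bool)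
    {γ : Cube S A} (hγ : γ ∈ R) :
    (fun g => γ (fun k => if h : k ∈ Q then f ⟨k, h⟩ else g k)) ∈ R := by
  have h := force_finset hR (fun k => if h : k ∈ Q then f ⟨k, h⟩ else false) hγ Q.toFinset
  refine Set.mem_of_eq_of_mem ?_ h
  funext g
  congr 1
  funext k
  by_cases hk : k ∈ Q
  · simp [hk, Set.mem_toFinset]
  · simp [hk, Set.mem_toFinset]

def liftg (Q : Set S) [DecidablePred (· ∈ Q)] (f : {x : S // x ∈ Q} → Bool)
    (i : {x : S // x ∉ Q}) (g : {y : {x : S // x ∉ Q} // y ≠ i} → Bool) :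
    {x : S // x ≠ i.val} → Bool :=
  fun k => if hq : k.val ∈ Q then f ⟨k.val, hq⟩
    else g ⟨⟨k.val, hq⟩, fun he => k.2 (congrArg Subtype.val he)⟩

lemma cut_face (Q : Set S) [DecidablePred (· ∈ Q)] (f : {x : S // x ∈ Q} → Bool)
    (i : {x : S // x ∉ Q}) (b : Bool) (γ : Cube S A)
    (g : {y : {x : S // x ∉ Q} // y ≠ i} → Bool) :
    face i b (cut Q γ f) g = face i.val b γ (liftg Q f i g) := by
  show γ _ = γ _
  congr 1
  funext k
  by_cases hq : k ∈ Q
  · have hki : k ≠ i.val := fun e => i.2 (e ▸ hq)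
    simp [hq, hki, liftg]
  · by_cases hki : k = i.val
    · have hi : (⟨k, hq⟩ : {x : S // x ∉ Q}) = i := Subtype.ext hki
      simp only [dif_neg hq, dif_pos hi, dif_pos hki]
    · have hne : (⟨k, hq⟩ : {x : S // x ∉ Q}) ≠ i := fun e => hki (congrArg Subtype.val e)
      simp [hq, hki, hne, liftg]

lemma face_cut_eq (Q : Set S) [DecidablePred (· ∈ Q)] (f : {x : S // x ∈ Q} → Bool)
    (i : {x : S // x ∉ Q}) {b b' : Bool} {γ γ' : Cube S A}
    (h : face i.val b γ = face i.val b' γ') :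
    face i b (cut Q γ f) = face i b' (cut Q γ' f) := by
  funext g
  rw [cut_face, cut_face, h]

lemma cut_force (Q : Set S) [DecidablePred (· ∈ Q)] (f : {x : S // x ∈ Q} → Bool)
    (γ : Cube S A) :
    cut Q (fun g => γ (fun k => if h : k ∈ Q then f ⟨k, h⟩ else g k)) f = cut Q γ f := by
  funext g
  show γ _ = γ _
  congr 1
  funext k
  by_cases hq : k ∈ Q
  · simp [hq]
  · simp [hq]

lemma face_force (Q : Set S) [DecidablePred (· ∈ Q)] (f : {x : S // x ∈ Q} → Bool)
    (i : {x : S // x ∉ Q}) (b : Bool) (γ : Cube S A) (h : {x : S // x ≠ i.val} → Bool) :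
    face i.val b (fun g => γ (fun k => if hq : k ∈ Q then f ⟨k, hq⟩ else g k)) h =
    face i b (cut Q γ f)
      (fun y => h ⟨y.val.val, fun he => y.2 (Subtype.ext he)⟩) := by
  show γ _ = γ _
  congr 1
  funext k
  by_cases hq : k ∈ Q
  · have hki : k ≠ i.val := fun e => i.2 (e ▸ hq)
    simp [hq, hki]
  · by_cases hki : k = i.val
    · have hi : (⟨k, hq⟩ : {x : S // x ∉ Q}) = i := Subtype.ext hki
      simp only [dif_neg hq, dif_pos hi, dif_pos hki]
    · have hne : (⟨k, hq⟩ : {x : S // x ∉ Q}) ≠ i := fun e => hki (congrArg Subtype.val e)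
      simp [hq, hki, hne]

end Aux

/-- projecting onto a subcube preserves (S)-symmetry and (S)-reflexivity;
(S)-transitivity together with (S)-reflexivity yields (S∖Q)-transitivity of the
projection `cut_Q(R)_f`. -/
theorem stmt4 {A : Type u} {S : Type v} [Nonempty A] [Fintype S] [DecidableEq S]
    (Q : Set S) [DecidablePred (· ∈ Q)] (f : {x : S // x ∈ Q} → Bool)
    (R : Set (Cube S A)) :
    (SSymm R → SSymm (cutProj Q R f)) ∧
    (SRefl R → SRefl (cutProj Q R f)) ∧
    (STrans R → SRefl R → STrans (cutProj Q R f)) := by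
  refine ⟨?_, ?_, ?_⟩
  · intro hS i a b hab
    obtain ⟨δ, hδ, hp⟩ := hab
    obtain ⟨γ, hγ, rfl⟩ := hδ
    obtain ⟨γ', hγ', heq'⟩ := hS i.val _ _ ⟨γ, hγ, rfl⟩
    have h1 : face i.val true γ = face i.val false γ' := congrArg Prod.fst heq'
    have h2 : face i.val false γ = face i.val true γ' := congrArg Prod.snd heq'
    refine ⟨cut Q γ' f, ⟨γ', hγ', rfl⟩, ?_⟩
    have hfst : a = face i false (cut Q γ f) := congrArg Prod.fst hp
    have hsnd : b = face i true (cut Q γ f) := congrArg Prod.snd hp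
    rw [hfst, hsnd, face_cut_eq Q f i h1, face_cut_eq Q f i h2]
  · intro hR i a b hab
    obtain ⟨δ, hδ, hp⟩ := hab
    obtain ⟨γ, hγ, rfl⟩ := hδ
    have hqr := hR i.val _ _ ⟨γ, hγ, rfl⟩
    obtain ⟨γ₀, hγ₀, heq₀⟩ := hqr.1
    obtain ⟨γ₁, hγ₁, heq₁⟩ := hqr.2
    have hfst : a = face i false (cut Q γ f) := congrArg Prod.fst hp
    have hsnd : b = face i true (cut Q γ f) := congrArg Prod.snd hp
    constructor
    · refine ⟨cut Q γ₀ f, ⟨γ₀, hγ₀, rfl⟩, ?_⟩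
      have e1 : face i.val false γ = face i.val false γ₀ := congrArg Prod.fst heq₀
      have e2 : face i.val false γ = face i.val true γ₀ := congrArg Prod.snd heq₀
      rw [hfst, face_cut_eq Q f i e1, Prod.mk.injEq]
      exact ⟨rfl, face_cut_eq Q f i (e1.symm.trans e2)⟩
    · refine ⟨cut Q γ₁ f, ⟨γ₁, hγ₁, rfl⟩, ?_⟩
      have e1 : face i.val true γ = face i.val false γ₁ := congrArg Prod.fst heq₁
      have e2 : face i.val true γ = face i.val true γ₁ := congrArg Prod.snd heq₁
      rw [hsnd, face_cut_eq Q f i e1, Prod.mk.injEq]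
      exact ⟨rfl, face_cut_eq Q f i (e1.symm.trans e2)⟩
  · intro hT hR i a b c hab hbc
    obtain ⟨δ, hδ, hp⟩ := hab
    obtain ⟨γ, hγ, rfl⟩ := hδ
    obtain ⟨δ', hδ', hp'⟩ := hbc
    obtain ⟨γ', hγ', rfl⟩ := hδ'
    have hfst : a = face i false (cut Q γ f) := congrArg Prod.fst hp
    have hsnd : b = face i true (cut Q γ f) := congrArg Prod.snd hp
    have hfst' : b = face i false (cut Q γ' f) := congrArg Prod.fst hp'
    have hsnd' : c = face i true (cut Q γ' f) := congrArg Prod.snd hp'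
    -- forced cubes
    have hγf : (fun g => γ (fun k => if h : k ∈ Q then f ⟨k, h⟩ else g k)) ∈ R :=
      force_Q Q hR f hγ
    have hγ'f : (fun g => γ' (fun k => if h : k ∈ Q then f ⟨k, h⟩ else g k)) ∈ R :=
      force_Q Q hR f hγ'
    have hcutf : cut Q (fun g => γ (fun k => if h : k ∈ Q then f ⟨k, h⟩ else g k)) f
        = cut Q γ f := cut_force Q f γ
    have hcutf' : cut Q (fun g => γ' (fun k => if h : k ∈ Q then f ⟨k, h⟩ else g k)) f
        = cut Q γ' f := cut_force Q f γ'
    have hb : face i true (cut Q γ f) = face i false (cut Q γ' f) := by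
      rw [← hsnd, ← hfst']
    have hmid : face i.val true (fun g => γ (fun k => if h : k ∈ Q then f ⟨k, h⟩ else g k))
        = face i.val false (fun g => γ' (fun k => if h : k ∈ Q then f ⟨k, h⟩ else g k)) := by
      funext h
      rw [face_force Q f i true γ h, face_force Q f i false γ' h, hb]
    have h2 : (face i.val true (fun g => γ (fun k => if h : k ∈ Q then f ⟨k, h⟩ else g k)),
        face i.val true (fun g => γ' (fun k => if h : k ∈ Q then f ⟨k, h⟩ else g k)))
        ∈ facesRel i.val R := by
      rw [hmid]
      exact ⟨_, hγ'f, rfl⟩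
    obtain ⟨γ'', hγ'', heq''⟩ := hT i.val _ _ _ ⟨_, hγf, rfl⟩ h2
    have e1 : face i.val false (fun g => γ (fun k => if h : k ∈ Q then f ⟨k, h⟩ else g k))
        = face i.val false γ'' := congrArg Prod.fst heq''
    have e2 : face i.val true (fun g => γ' (fun k => if h : k ∈ Q then f ⟨k, h⟩ else g k))
        = face i.val true γ'' := congrArg Prod.snd heq''
    refine ⟨cut Q γ'' f, ⟨γ'', hγ'', rfl⟩, ?_⟩
    rw [hfst, hsnd', ← hcutf, ← hcutf', face_cut_eq Q f i e1, face_cut_eq Q f i e2]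
end

section
/- For an algebra 𝔸, finite set S with |S| ≥ 1, and an S-indexed family of congruences {θ_i}_{i∈S} of 𝔸, the |S|-dimensional tolerance generated by the cubes ⋃_{i∈S} cube_i(θ_i) equals the subalgebra of 𝔸^(2^S) generated by this same set: M({θ_i}_{i∈S}) = Sg_{A^(2^S)}(⋃_{i∈S} cube_i(θ_i)). -/
universe u v

section Stmt8Aux

variable {A : Type u} {S : Type v} (σ : Signature) [Alg σ A]

theorem subalgGen_compat (X : Set (Cube S A)) : CompatCube σ (subalgGen σ X) := by
  intro o γ h
  refine Set.mem_sInter.2 fun R hR => ?_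
  exact hR.1 o γ fun k => Set.mem_sInter.1 (h k) R hR

theorem subset_subalgGen (X : Set (Cube S A)) : X ⊆ subalgGen σ X :=
  fun γ hγ => Set.mem_sInter.2 fun _ hR => hR.2 hγ

theorem subalgGen_min (X R : Set (Cube S A)) (hc : CompatCube σ R) (hs : X ⊆ R) :
    subalgGen σ X ⊆ R := fun _ hγ => Set.mem_sInter.1 hγ R ⟨hc, hs⟩

/-- `subalgGen` is closed under precomposition with a reindexing map, provided the
generators are. -/
theorem subalgGen_precomp (X : Set (Cube S A)) (φ : (S → Bool) → (S → Bool))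
    (hX : ∀ γ ∈ X, (γ ∘ φ) ∈ subalgGen σ X) :
    ∀ γ ∈ subalgGen σ X, (γ ∘ φ) ∈ subalgGen σ X := by
  intro γ hγ
  have key : subalgGen σ X ⊆ {δ | δ ∈ subalgGen σ X ∧ (δ ∘ φ) ∈ subalgGen σ X} := by
    apply subalgGen_min
    · intro o δ h
      refine ⟨subalgGen_compat σ X o δ fun k => (h k).1, ?_⟩
      exact subalgGen_compat σ X o (fun k => δ k ∘ φ) fun k => (h k).2
    · intro δ hδ
      exact ⟨subset_subalgGen σ X hδ, hX δ hδ⟩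
  exact (key hγ).2

variable [DecidableEq S]

def phiRefl (i : S) (b : Bool) : (S → Bool) → (S → Bool) :=
  fun f j => if j = i then b else f j

def phiSym (i : S) : (S → Bool) → (S → Bool) :=
  fun f j => if j = i then !(f i) else f j

theorem reflMap_eq (i : S) (b : Bool) (γ : Cube S A) :
    reflMap i b γ = γ ∘ phiRefl i b := by
  funext f
  unfold reflMap glue
  rw [ite_self]
  unfold face phiRefl Function.comp
  congr 1

theorem symMap_eq (i : S) (γ : Cube S A) :
    symMap i γ = γ ∘ phiSym i := by
  funext f
  show (if f i = true then face i false γ (fun j => f j.val)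
      else face i true γ (fun j => f j.val)) = γ (phiSym i f)
  cases hf : f i
  · rw [if_neg (by simp)]
    show γ (fun j => if h : j = i then true else f j) = γ (phiSym i f)
    congr 1
    funext j
    by_cases h : j = i <;> simp [phiSym, h, hf]
  · rw [if_pos rfl]
    show γ (fun j => if h : j = i then false else f j) = γ (phiSym i f)
    congr 1
    funext j
    by_cases h : j = i <;> simp [phiSym, h, hf]

theorem face_reflMap (i : S) (b b' : Bool) (γ : Cube S A) :
    face i b' (reflMap i b γ) = face i b γ := by
  funext f
  rw [reflMap_eq]
  simp only [face, Function.comp, phiRefl]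
  congr 1
  funext j
  by_cases h : j = i <;> simp [h, phiRefl]

theorem face_symMap (i : S) (b : Bool) (γ : Cube S A) :
    face i b (symMap i γ) = face i (!b) γ := by
  funext f
  rw [symMap_eq]
  simp only [face, Function.comp, phiSym]
  congr 1
  funext j
  by_cases h : j = i <;> simp [h, phiSym]

end Stmt8Aux

/-- for congruences `θ_i`, the |S|-dimensional tolerance generated by the
cubes `⋃ i, cube_i(θ_i)` equals the subalgebra generated by the same set. -/
theorem stmt8 {A : Type u} {S : Type v} (σ : Signature) [Alg σ A]
    [Nonempty S] [DecidableEq S] (θ : S → Set (A × A))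
    (hθ : ∀ i, IsCongruence σ (θ i)) :
    MRel σ θ = subalgGen σ (⋃ i : S, cubeSet i (θ i)) := by
  set X : Set (Cube S A) := ⋃ i : S, cubeSet i (θ i) with hX
  set R : Set (Cube S A) := subalgGen σ X with hRdef
  -- generators closed under the reindexing maps
  have hreflX : ∀ (i : S) (b : Bool), ∀ γ ∈ X, (γ ∘ phiRefl i b) ∈ R := by
    intro i b γ hγ
    obtain ⟨j, hj⟩ := Set.mem_iUnion.1 hγ
    obtain ⟨p, hp, rfl⟩ := hj
    by_cases h : i = j
    · subst h
      have : (cubeAt i p ∘ phiRefl i b) = cubeAt i (bif b then p.2 else p.1,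
          bif b then p.2 else p.1) := by
        funext f
        simp only [cubeAt, Function.comp, phiRefl, if_pos rfl]
        cases f i <;> rfl
      rw [this]
      apply subset_subalgGen σ X
      exact Set.mem_iUnion.2 ⟨i, ⟨_, (hθ i).1 _, rfl⟩⟩
    · have : (cubeAt j p ∘ phiRefl i b) = cubeAt j p := by
        funext f
        simp only [cubeAt, Function.comp, phiRefl]
        rw [if_neg (fun hji => h hji.symm)]
      rw [this]
      exact subset_subalgGen σ X (Set.mem_iUnion.2 ⟨j, ⟨p, hp, rfl⟩⟩)
  have hsymX : ∀ (i : S), ∀ γ ∈ X, (γ ∘ phiSym i) ∈ R := by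
    intro i γ hγ
    obtain ⟨j, hj⟩ := Set.mem_iUnion.1 hγ
    obtain ⟨p, hp, rfl⟩ := hj
    by_cases h : i = j
    · subst h
      have : (cubeAt i p ∘ phiSym i) = cubeAt i (p.2, p.1) := by
        funext f
        simp only [cubeAt, Function.comp, phiSym, if_pos rfl]
        cases f i <;> rfl
      rw [this]
      exact subset_subalgGen σ X (Set.mem_iUnion.2 ⟨i, ⟨_, (hθ i).2.1 _ _ hp, rfl⟩⟩)
    · have : (cubeAt j p ∘ phiSym i) = cubeAt j p := by
        funext f
        simp only [cubeAt, Function.comp, phiSym]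
        rw [if_neg (fun hji => h hji.symm)]
      rw [this]
      exact subset_subalgGen σ X (Set.mem_iUnion.2 ⟨j, ⟨p, hp, rfl⟩⟩)
  -- hence R itself is closed under reflMap and symMap
  have hrefl : ∀ (i : S) (b : Bool), ∀ γ ∈ R, reflMap i b γ ∈ R := by
    intro i b γ hγ
    rw [reflMap_eq]
    exact subalgGen_precomp σ X (phiRefl i b) (hreflX i b) γ hγ
  have hsym : ∀ (i : S), ∀ γ ∈ R, symMap i γ ∈ R := by
    intro i γ hγ
    rw [symMap_eq]
    exact subalgGen_precomp σ X (phiSym i) (hsymX i) γ hγ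
  -- R is a tolerance
  have hSRefl : SRefl R := by
    intro i a b hab
    obtain ⟨γ, hγ, heq⟩ := hab
    have ha : a = face i false γ := congrArg Prod.fst heq
    have hb : b = face i true γ := congrArg Prod.snd heq
    constructor
    · exact ⟨reflMap i false γ, hrefl i false γ hγ, by
        rw [ha, face_reflMap, face_reflMap]⟩
    · exact ⟨reflMap i true γ, hrefl i true γ hγ, by
        rw [hb, face_reflMap, face_reflMap]⟩
  have hSSymm : SSymm R := by
    intro i a b hab
    obtain ⟨γ, hγ, heq⟩ := hab
    have ha : a = face i false γ := congrArg Prod.fst heq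
    have hb : b = face i true γ := congrArg Prod.snd heq
    refine ⟨symMap i γ, hsym i γ hγ, ?_⟩
    rw [ha, hb, face_symMap, face_symMap]
    rfl
  have hTol : IsTolerance σ R := ⟨subalgGen_compat σ X, hSRefl, hSSymm⟩
  apply subset_antisymm
  · exact Set.sInter_subset_of_mem ⟨hTol, subset_subalgGen σ X⟩
  · apply subalgGen_min
    · intro o γ h
      refine Set.mem_sInter.2 fun T hT => ?_
      exact hT.1.1 o γ fun k => Set.mem_sInter.1 (h k) T hT
    · exact fun γ hγ => Set.mem_sInter.2 fun T hT => hT.2 hγ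
end

section
/- Let 𝔸 be an algebra in a variety with a Taylor term t, let θ, δ be congruences of 𝔸, and suppose R is a 2-dimensional tolerance with M(θ,θ) ≤ R ≤ rect(θ,θ) such that R has (δ,i)-centrality for each i ∈ 2. Then for any j ∈ 2, the directional transitive closure R^(∘_j) has (δ,i)-centrality for each i ∈ 2. -/
universe u v

section Stmt13Aux

open Relation

variable {A : Type u}

/-- The other index of `Fin 2`. -/
def st13other (j : Fin 2) : Fin 2 := if j = 0 then 1 else 0

lemma st13other_ne (j : Fin 2) : st13other j ≠ j := by revert j; decide

lemma st13cases (j k : Fin 2) : k = j ∨ k = st13other j := by revert j k; decide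

/-- The function `Fin 2 → Bool` taking value `d` at `j` and `e` elsewhere. -/
def st13pt (j : Fin 2) (d e : Bool) : Fin 2 → Bool := fun k => if k = j then d else e

lemma st13pt_self (j : Fin 2) (d e : Bool) : st13pt j d e j = d := by simp [st13pt]

lemma st13pt_otherval (j : Fin 2) (d e : Bool) : st13pt j d e (st13other j) = e := by
  simp [st13pt, st13other_ne j]

lemma st13pt_swap (j : Fin 2) (d e : Bool) : st13pt (st13other j) d e = st13pt j e d := by
  funext k
  have h3 : ¬ (j = st13other j) := fun h => st13other_ne j h.symm
  by_cases hk : k = j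
  · have h2 : ¬ (k = st13other j) := by
      rw [hk]; exact fun h => st13other_ne j h.symm
    simp [st13pt, hk, h2, h3]
  · have h2 : k = st13other j := (st13cases j k).resolve_left hk
    simp [st13pt, hk, h2, st13other_ne j]

lemma st13face_eval (j : Fin 2) (d e : Bool) (γ : Cube (Fin 2) A) :
    face j d γ (fun _ => e) = γ (st13pt j d e) := rfl

lemma st13subsingleton (i : Fin 2) (w z : {x : Fin 2 // x ≠ i}) : w = z := by
  have : ∀ (i wv zv : Fin 2), wv ≠ i → zv ≠ i → wv = zv := by decide
  exact Subtype.ext (this i w.1 z.1 w.2 z.2)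

lemma st13fun_const (i : Fin 2) (f : {x : Fin 2 // x ≠ i} → Bool) :
    f = fun _ => f ⟨st13other i, st13other_ne i⟩ := by
  funext w; exact congrArg f (st13subsingleton i w _)

lemma st13card (i : Fin 2) (P : ({x : Fin 2 // x ≠ i} → Bool) → Prop) :
    Nat.card {f // P f} = 1 ↔ ¬ (P (fun _ => false) ↔ P (fun _ => true)) := by
  classical
  have e1 : {f // P f} ≃ {b : Bool // P (fun _ => b)} := by
    refine Equiv.subtypeEquiv
      (⟨fun f => f ⟨st13other i, st13other_ne i⟩, fun b _ => b,
        fun f => (st13fun_const i f).symm, fun b => rfl⟩ :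
        ({x : Fin 2 // x ≠ i} → Bool) ≃ Bool) ?_
    intro f
    constructor
    · intro hf
      rw [st13fun_const i f] at hf
      exact hf
    · intro hf
      rw [st13fun_const i f]
      exact hf
  rw [Nat.card_congr e1]
  by_cases h0 : P (fun _ => false) <;> by_cases h1 : P (fun _ => true)
  · have e2 : {b : Bool // P (fun _ => b)} ≃ Bool :=
      ⟨fun s => s.1, fun b => ⟨b, by cases b <;> assumption⟩, fun s => rfl, fun b => rfl⟩
    rw [Nat.card_congr e2, Nat.card_eq_fintype_card, Fintype.card_bool]
    simp [h0, h1]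
  · have e2 : {b : Bool // P (fun _ => b)} ≃ Unit :=
      ⟨fun _ => Unit.unit, fun _ => ⟨false, h0⟩, fun s => by
        obtain ⟨b, hb⟩ := s
        cases b
        · rfl
        · exact absurd hb h1, fun b => rfl⟩
    rw [Nat.card_congr e2]
    simp [h0, h1]
  · have e2 : {b : Bool // P (fun _ => b)} ≃ Unit :=
      ⟨fun _ => Unit.unit, fun _ => ⟨true, h1⟩, fun s => by
        obtain ⟨b, hb⟩ := s
        cases b
        · exact absurd hb h0
        · rfl, fun b => rfl⟩
    rw [Nat.card_congr e2]
    simp [h0, h1]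
  · have e2 : IsEmpty {b : Bool // P (fun _ => b)} := by
      refine ⟨fun s => ?_⟩
      obtain ⟨b, hb⟩ := s
      cases b
      · exact h0 hb
      · exact h1 hb
    rw [Nat.card_of_isEmpty]
    simp [h0, h1]

end Stmt13Aux
section Stmt13Aux2

open Relation

variable {A : Type u}

lemma st13term_delta (σ : Signature) [Alg σ A] (δ : Set (A × A))
    (hcomp : CompatRel σ δ) {p : ℕ} (tm : Term σ p) (x y : Fin p → A)
    (h : ∀ i, (x i, y i) ∈ δ) : (tm.eval x, tm.eval y) ∈ δ := by
  induction tm with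
  | var i => exact h i
  | app o ts ih => exact hcomp o _ _ (fun k => ih k)

lemma st13term_mem (σ : Signature) [Alg σ A] (R : Set (Cube (Fin 2) A))
    (hR : CompatCube σ R) {p : ℕ} (tm : Term σ p) (γ : Fin p → Cube (Fin 2) A)
    (h : ∀ i, γ i ∈ R) : (fun f => tm.eval fun i => γ i f) ∈ R := by
  induction tm with
  | var i => exact h i
  | app o ts ih => exact hR o (fun k => fun f => (ts k).eval fun i => γ i f) (fun k => ih k)

lemma st13cube_mem (σ : Signature) [Alg σ A] (θ : Set (A × A)) (R : Set (Cube (Fin 2) A))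
    (hM : MRel σ (fun _ : Fin 2 => θ) ⊆ R)
    (i : Fin 2) (p q : A) (hpq : (p, q) ∈ θ) : cubeAt i (p, q) ∈ R := by
  apply hM
  apply Set.mem_sInter.mpr
  rintro T ⟨-, hX⟩
  exact hX (Set.mem_iUnion.mpr ⟨i, ⟨(p, q), hpq, rfl⟩⟩)

lemma st13cubeAt_eval (i : Fin 2) (p q : A) (f : Fin 2 → Bool) :
    cubeAt i (p, q) f = bif f i then q else p := rfl

lemma st13cent (δ : Set (A × A)) (i : Fin 2) (R : Set (Cube (Fin 2) A))
    (hcent : Centrality δ i R) {γ : Cube (Fin 2) A} (hγ : γ ∈ R) :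
    ((face i false γ (fun _ => false), face i true γ (fun _ => false)) ∈ δ ↔
     (face i false γ (fun _ => true), face i true γ (fun _ => true)) ∈ δ) := by
  by_contra hne
  apply hcent
  refine ⟨γ, hγ, ?_⟩
  have h2 : (2:ℕ) ^ (Fintype.card (Fin 2) - 1) - 1 = 1 := by simp
  rw [h2, st13card]
  exact hne

lemma st13cent' (δ : Set (A × A)) (i : Fin 2) (R : Set (Cube (Fin 2) A))
    (hcent : Centrality δ i R) {γ : Cube (Fin 2) A} (hγ : γ ∈ R) :
    ((γ (st13pt i false false), γ (st13pt i true false)) ∈ δ ↔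
     (γ (st13pt i false true), γ (st13pt i true true)) ∈ δ) := by
  have h := st13cent δ i R hcent hγ
  rwa [st13face_eval, st13face_eval, st13face_eval, st13face_eval] at h

lemma st13step (j : Fin 2) (R : Set (Cube (Fin 2) A))
    {p q : Cube {x : Fin 2 // x ≠ j} A}
    (h : (p, q) ∈ facesRel j R) :
    ∃ Γ ∈ R, p = face j false Γ ∧ q = face j true Γ := by
  obtain ⟨Γ, hΓ, hpq⟩ := h
  exact ⟨Γ, hΓ, congrArg Prod.fst hpq, congrArg Prod.snd hpq⟩

lemma st13rectθ (θ : Set (A × A)) (R : Set (Cube (Fin 2) A))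
    (hrect : R ⊆ rectRel (fun _ : Fin 2 => θ)) (j : Fin 2)
    {Γ : Cube (Fin 2) A} (hΓ : Γ ∈ R) :
    (∀ e, (Γ (st13pt j false e), Γ (st13pt j true e)) ∈ θ) ∧
    (∀ d, (Γ (st13pt j d false), Γ (st13pt j d true)) ∈ θ) := by
  have H := hrect hΓ
  constructor
  · intro e
    have h := H j (fun _ => e)
    rwa [st13face_eval, st13face_eval] at h
  · intro d
    have h := H (st13other j) (fun _ => d)
    rwa [st13face_eval, st13face_eval, st13pt_swap, st13pt_swap] at h

lemma st13first {r : Cube {x : Fin 2 // x ≠ j} A → Cube {x : Fin 2 // x ≠ j} A → Prop}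
    {a b : Cube {x : Fin 2 // x ≠ j} A}
    (h : Relation.TransGen r a b) : ∃ c, r a c := by
  induction h with
  | single h => exact ⟨_, h⟩
  | tail _ _ ih => exact ih

lemma st13chain_theta (θ : Set (A × A)) (hθt : TransRel θ)
    (R : Set (Cube (Fin 2) A)) (hrect : R ⊆ rectRel (fun _ : Fin 2 => θ)) (j : Fin 2)
    {a b : Cube {x : Fin 2 // x ≠ j} A}
    (h : Relation.TransGen
      (fun p q : Cube {x : Fin 2 // x ≠ j} A => (p, q) ∈ facesRel j R) a b)
    (e : Bool) : (a (fun _ => e), b (fun _ => e)) ∈ θ := by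
  induction h with
  | single hstep =>
    obtain ⟨Γ, hΓ, h1, h2⟩ := st13step j R hstep
    rw [h1, h2, st13face_eval, st13face_eval]
    exact (st13rectθ θ R hrect j hΓ).1 e
  | tail _ hstep ih =>
    obtain ⟨Γ, hΓ, h1, h2⟩ := st13step j R hstep
    refine hθt _ _ _ ih ?_
    rw [h1, h2, st13face_eval, st13face_eval]
    exact (st13rectθ θ R hrect j hΓ).1 e

lemma st13easy (δ : Set (A × A)) (j : Fin 2)
    (R : Set (Cube (Fin 2) A)) (hc : Centrality δ (st13other j) R)
    {a b : Cube {x : Fin 2 // x ≠ j} A}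
    (h : Relation.TransGen
      (fun p q : Cube {x : Fin 2 // x ≠ j} A => (p, q) ∈ facesRel j R) a b) :
    ((a (fun _ => false), a (fun _ => true)) ∈ δ ↔
     (b (fun _ => false), b (fun _ => true)) ∈ δ) := by
  have stepiff : ∀ p q : Cube {x : Fin 2 // x ≠ j} A, (p, q) ∈ facesRel j R →
      (((p (fun _ => false), p (fun _ => true)) ∈ δ) ↔
       ((q (fun _ => false), q (fun _ => true)) ∈ δ)) := by
    intro p q hstep
    obtain ⟨Γ, hΓ, h1, h2⟩ := st13step j R hstep
    have hcent := st13cent' δ (st13other j) R hc hΓ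
    rw [st13pt_swap, st13pt_swap, st13pt_swap, st13pt_swap] at hcent
    rw [h1, h2, st13face_eval, st13face_eval, st13face_eval, st13face_eval]
    exact hcent
  induction h with
  | single hstep => exact stepiff _ _ hstep
  | tail _ hstep ih => exact ih.trans (stepiff _ _ hstep)

end Stmt13Aux2
section Stmt13Hard

open Relation

variable {A : Type u}

lemma st13hard (σ : Signature) [Alg σ A] (hT : IsTaylorAlg σ A)
    (θ δ : Set (A × A)) (hθ : IsCongruence σ θ) (hδ : IsCongruence σ δ)
    (R : Set (Cube (Fin 2) A)) (hRc : CompatCube σ R)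
    (hM : MRel σ (fun _ : Fin 2 => θ) ⊆ R)
    (hrect : R ⊆ rectRel (fun _ : Fin 2 => θ))
    (hc : ∀ i : Fin 2, Centrality δ i R) (j : Fin 2)
    {a b : Cube {x : Fin 2 // x ≠ j} A}
    (h : Relation.TransGen
      (fun p q : Cube {x : Fin 2 // x ≠ j} A => (p, q) ∈ facesRel j R) a b)
    (c₀ : Bool) (hhyp : (a (fun _ => c₀), b (fun _ => c₀)) ∈ δ) :
    (a (fun _ => !c₀), b (fun _ => !c₀)) ∈ δ := by
  obtain ⟨hδr, hδs, hδt, hδc⟩ := hδ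
  obtain ⟨hθr, hθs, hθt, -⟩ := hθ
  obtain ⟨m, tt, hid, hpat⟩ := hT
  choose u v hu hv hTay using hpat
  set x0 := a (fun _ => c₀) with hx0def
  set y0 := a (fun _ => !c₀) with hy0def
  set xk := b (fun _ => c₀) with hxkdef
  set yk := b (fun _ => !c₀) with hykdef
  -- the pattern-context selector
  set S : Fin (m+1) → Fin (m+1) → Bool → A :=
    fun c i e => if e = c₀ then (bif u c i then y0 else x0) else (bif v c i then y0 else x0)
    with hS
  have hnotc : (!c₀) ≠ c₀ := by cases c₀ <;> simp
  have hS1 : ∀ c i : Fin (m+1), S c i c₀ = (bif u c i then y0 else x0) := by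
    intro c i; rw [hS]; simp
  have hS2 : ∀ c i : Fin (m+1), S c i (!c₀) = (bif v c i then y0 else x0) := by
    intro c i; rw [hS]; simp [hnotc]
  have hSfun1 : ∀ c : Fin (m+1), (fun i => S c i c₀) = (fun i => bif u c i then y0 else x0) := by
    intro c; funext i; exact hS1 c i
  have hSfun2 : ∀ c : Fin (m+1), (fun i => S c i (!c₀)) = (fun i => bif v c i then y0 else x0) := by
    intro c; funext i; exact hS2 c i
  have hScc1 : ∀ c : Fin (m+1), S c c c₀ = x0 := by
    intro c; rw [hS1, hu c]; rfl
  have hScc2 : ∀ c : Fin (m+1), S c c (!c₀) = y0 := by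
    intro c; rw [hS2, hv c]; rfl
  -- θ facts
  have hxyθ : (x0, y0) ∈ θ := by
    obtain ⟨cc, hcstep⟩ := st13first h
    obtain ⟨Γ, hΓ, h1, -⟩ := st13step j R hcstep
    have hA : ∀ e : Bool, a (fun _ => e) = Γ (st13pt j false e) := by
      intro e; rw [h1, st13face_eval]
    rw [hx0def, hy0def, hA, hA]
    cases c₀
    · exact (st13rectθ θ R hrect j hΓ).2 false
    · exact hθs _ _ ((st13rectθ θ R hrect j hΓ).2 false)
  have hSxy : ∀ (c i : Fin (m+1)) (e : Bool), S c i e = x0 ∨ S c i e = y0 := by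
    intro c i e
    show (if e = c₀ then (bif u c i then y0 else x0) else (bif v c i then y0 else x0)) = x0 ∨
      (if e = c₀ then (bif u c i then y0 else x0) else (bif v c i then y0 else x0)) = y0
    by_cases he : e = c₀
    · rw [if_pos he]
      cases u c i
      · exact Or.inl rfl
      · exact Or.inr rfl
    · rw [if_neg he]
      cases v c i
      · exact Or.inl rfl
      · exact Or.inr rfl
  have hθxy2 : ∀ w z : A, (w = x0 ∨ w = y0) → (z = x0 ∨ z = y0) → (w, z) ∈ θ := by
    rintro w z (rfl | rfl) (rfl | rfl)
    · exact hθr x0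
    · exact hxyθ
    · exact hθs _ _ hxyθ
    · exact hθr y0
  have hyykθ : (y0, yk) ∈ θ := st13chain_theta θ hθt R hrect j h (!c₀)
  -- generic cube construction in direction other j
  have hmkR : ∀ W : Bool → A, (W false, W true) ∈ θ →
      cubeAt (st13other j) (W false, W true) ∈ R := by
    intro W hW
    exact st13cube_mem σ θ R hM _ _ _ hW
  have hmkval : ∀ (W : Bool → A) (d e : Bool),
      cubeAt (st13other j) (W false, W true) (st13pt j d e) = W e := by
    intro W d e
    rw [st13cubeAt_eval, st13pt_otherval]
    cases e <;> rfl
  -- orientation helpers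
  have horient : ∀ P : Bool → A, ((P c₀, P (!c₀)) ∈ δ) ↔ ((P false, P true) ∈ δ) := by
    intro P
    cases c₀
    · simp
    · constructor
      · intro hh; exact hδs _ _ (by simpa using hh)
      · intro hh; simpa using hδs _ _ hh
  have hflip : ∀ p : Bool → Prop, (p false ↔ p true) → p c₀ → p (!c₀) := by
    intro p hp hpc
    cases c₀
    · simpa using hp.mp hpc
    · simpa using hp.mpr hpc
  -- Claim A
  have claimA : ∀ b' : Cube {x : Fin 2 // x ≠ j} A,
      Relation.TransGen
        (fun p q : Cube {x : Fin 2 // x ≠ j} A => (p, q) ∈ facesRel j R) a b' →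
      ∀ c : Fin (m+1),
      (tt.eval (fun i => if i = c then b' (fun _ => c₀) else S c i c₀),
       tt.eval (fun i => if i = c then b' (fun _ => !c₀) else S c i (!c₀))) ∈ δ := by
    have base : ∀ c : Fin (m+1),
        (tt.eval (fun i => if i = c then a (fun _ => c₀) else S c i c₀),
         tt.eval (fun i => if i = c then a (fun _ => !c₀) else S c i (!c₀))) ∈ δ := by
      intro c
      have e1 : (fun i => if i = c then a (fun _ => c₀) else S c i c₀)
          = (fun i => S c i c₀) := by
        funext i
        by_cases hic : i = c
        · rw [if_pos hic, hic, hScc1 c, hx0def]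
        · rw [if_neg hic]
      have e2 : (fun i => if i = c then a (fun _ => !c₀) else S c i (!c₀))
          = (fun i => S c i (!c₀)) := by
        funext i
        by_cases hic : i = c
        · rw [if_pos hic, hic, hScc2 c, hy0def]
        · rw [if_neg hic]
      rw [e1, e2, hSfun1, hSfun2, hTay c x0 y0]
      exact hδr _
    have step : ∀ b' b'' : Cube {x : Fin 2 // x ≠ j} A,
        (∀ c : Fin (m+1),
          (tt.eval (fun i => if i = c then b' (fun _ => c₀) else S c i c₀),
           tt.eval (fun i => if i = c then b' (fun _ => !c₀) else S c i (!c₀))) ∈ δ) →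
        (b', b'') ∈ facesRel j R →
        (∀ c : Fin (m+1),
          (tt.eval (fun i => if i = c then b'' (fun _ => c₀) else S c i c₀),
           tt.eval (fun i => if i = c then b'' (fun _ => !c₀) else S c i (!c₀))) ∈ δ) := by
      intro b' b'' hΦ hstep c
      obtain ⟨Γ, hΓ, h1, h2⟩ := st13step j R hstep
      have hb1 : ∀ e : Bool, b' (fun _ => e) = Γ (st13pt j false e) := by
        intro e; rw [h1, st13face_eval]
      have hb2 : ∀ e : Bool, b'' (fun _ => e) = Γ (st13pt j true e) := by
        intro e; rw [h2, st13face_eval]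
      set Sg : Cube (Fin 2) A := fun f => tt.eval (fun i =>
          (if i = c then Γ else cubeAt (st13other j) (S c i false, S c i true)) f)
        with hSg
      have hSgR : Sg ∈ R := by
        rw [hSg]
        apply st13term_mem σ R hRc tt
        intro i
        by_cases hic : i = c
        · rw [if_pos hic]; exact hΓ
        · rw [if_neg hic]
          exact hmkR (S c i) (hθxy2 _ _ (hSxy c i false) (hSxy c i true))
      have hval : ∀ d e : Bool, Sg (st13pt j d e) =
          tt.eval (fun i => if i = c then Γ (st13pt j d e) else S c i e) := by
        intro d e
        show tt.eval (fun i =>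
          (if i = c then Γ else cubeAt (st13other j) (S c i false, S c i true))
            (st13pt j d e)) = _
        congr 1
        funext i
        by_cases hic : i = c
        · rw [if_pos hic, if_pos hic]
        · rw [if_neg hic, if_neg hic]
          exact hmkval (S c i) d e
      have hcent := st13cent' δ (st13other j) R (hc (st13other j)) hSgR
      rw [st13pt_swap, st13pt_swap, st13pt_swap, st13pt_swap] at hcent
      have hknown0 : (Sg (st13pt j false c₀), Sg (st13pt j false (!c₀))) ∈ δ := by
        rw [hval, hval]
        simp only [← hb1]
        exact hΦ c
      have hknown : (Sg (st13pt j false false), Sg (st13pt j false true)) ∈ δ :=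
        (horient (fun e => Sg (st13pt j false e))).mp hknown0
      have hconc0 : (Sg (st13pt j true c₀), Sg (st13pt j true (!c₀))) ∈ δ :=
        (horient (fun e => Sg (st13pt j true e))).mpr (hcent.mp hknown)
      rw [hval, hval] at hconc0
      simp only [← hb2] at hconc0
      exact hconc0
    intro b' hb'
    induction hb' with
    | single hstep => exact step _ _ base hstep
    | tail _ hstep ih => exact step _ _ ih hstep
  -- Claim B
  have claimB : ∀ c : Fin (m+1),
      (tt.eval (fun i => S c i (!c₀)),
       tt.eval (fun i => if i = c then yk else S c i (!c₀))) ∈ δ := by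
    intro c
    have h1 : (tt.eval (fun i => S c i c₀),
        tt.eval (fun i => if i = c then xk else S c i c₀)) ∈ δ := by
      apply st13term_delta σ δ hδc
      intro i
      by_cases hic : i = c
      · rw [if_pos hic, hic, hScc1 c]
        exact hhyp
      · rw [if_neg hic]
        exact hδr _
    have hA := claimA b h c
    rw [← hxkdef, ← hykdef] at hA
    have h0 : tt.eval (fun i => S c i (!c₀)) = tt.eval (fun i => S c i c₀) := by
      rw [hSfun1, hSfun2, hTay c x0 y0]
    rw [h0]
    exact hδt _ _ _ h1 hA
  -- Claim C
  have claimC : ∀ (c : Fin (m+1)) (q : Fin (m+1) → A), (∀ i, (y0, q i) ∈ θ) →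
      (tt.eval (fun i => if i = c then y0 else q i),
       tt.eval (fun i => if i = c then yk else q i)) ∈ δ := by
    intro c q hq
    set T : Fin (m+1) → Bool → A := fun i e => if e = c₀ then S c i (!c₀) else q i with hTdef
    have hT1 : ∀ i, T i c₀ = S c i (!c₀) := by intro i; rw [hTdef]; simp
    have hT2 : ∀ i, T i (!c₀) = q i := by intro i; rw [hTdef]; simp [hnotc]
    have hTθ : ∀ i, (T i false, T i true) ∈ θ := by
      intro i
      have hqi : ∀ w : A, (w = x0 ∨ w = y0) → (w, q i) ∈ θ := by
        rintro w (rfl | rfl)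
        · exact hθt _ _ _ hxyθ (hq i)
        · exact hq i
      rw [hTdef]
      cases c₀
      · simp only [if_pos rfl, if_neg (by simp : ¬ (true = false))]
        exact hqi _ (hSxy c i (!false))
      · simp only [if_neg (by simp : ¬ (false = true)), if_pos rfl]
        exact hθs _ _ (hqi _ (hSxy c i (!true)))
    set Sg : Cube (Fin 2) A := fun f => tt.eval (fun i =>
        (if i = c then cubeAt j (y0, yk) else cubeAt (st13other j) (T i false, T i true)) f)
      with hSg
    have hSgR : Sg ∈ R := by
      rw [hSg]
      apply st13term_mem σ R hRc tt
      intro i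
      by_cases hic : i = c
      · rw [if_pos hic]
        exact st13cube_mem σ θ R hM _ _ _ hyykθ
      · rw [if_neg hic]
        exact st13cube_mem σ θ R hM _ _ _ (hTθ i)
    have hval : ∀ d e : Bool, Sg (st13pt j d e) =
        tt.eval (fun i => if i = c then (bif d then yk else y0) else T i e) := by
      intro d e
      show tt.eval (fun i =>
        (if i = c then cubeAt j (y0, yk) else cubeAt (st13other j) (T i false, T i true))
          (st13pt j d e)) = _
      congr 1
      funext i
      by_cases hic : i = c
      · rw [if_pos hic, if_pos hic, st13cubeAt_eval, st13pt_self]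
      · rw [if_neg hic, if_neg hic]
        exact hmkval (T i) d e
    have hcent := st13cent' δ j R (hc j) hSgR
    have hknown : (Sg (st13pt j false c₀), Sg (st13pt j true c₀)) ∈ δ := by
      rw [hval, hval]
      have g1 : (fun i => if i = c then (bif false then yk else y0) else T i c₀)
          = (fun i => S c i (!c₀)) := by
        funext i
        by_cases hic : i = c
        · rw [if_pos hic, hic, hScc2 c]; rfl
        · rw [if_neg hic, hT1 i]
      have g2 : (fun i => if i = c then (bif true then yk else y0) else T i c₀)
          = (fun i => if i = c then yk else S c i (!c₀)) := by
        funext i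
        by_cases hic : i = c
        · rw [if_pos hic, if_pos hic]; rfl
        · rw [if_neg hic, if_neg hic, hT1 i]
      rw [g1, g2]
      exact claimB c
    have hgoal : (Sg (st13pt j false (!c₀)), Sg (st13pt j true (!c₀))) ∈ δ :=
      hflip (fun e => (Sg (st13pt j false e), Sg (st13pt j true e)) ∈ δ) hcent hknown
    rw [hval, hval] at hgoal
    have g1 : (fun i => if i = c then (bif false then yk else y0) else T i (!c₀))
        = (fun i => if i = c then y0 else q i) := by
      funext i
      by_cases hic : i = c
      · rw [if_pos hic, if_pos hic]; rfl
      · rw [if_neg hic, if_neg hic, hT2 i]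
    have g2 : (fun i => if i = c then (bif true then yk else y0) else T i (!c₀))
        = (fun i => if i = c then yk else q i) := by
      funext i
      by_cases hic : i = c
      · rw [if_pos hic, if_pos hic]; rfl
      · rw [if_neg hic, if_neg hic, hT2 i]
    rw [g1, g2] at hgoal
    exact hgoal
  -- Claim D
  have claimD : ∀ s : ℕ, s ≤ m + 1 →
      (tt.eval (fun _ : Fin (m+1) => y0),
       tt.eval (fun i : Fin (m+1) => if (i : ℕ) < s then yk else y0)) ∈ δ := by
    intro s
    induction s with
    | zero =>
      intro _
      have e0 : (fun i : Fin (m+1) => if (i : ℕ) < 0 then yk else y0)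
          = (fun _ : Fin (m+1) => y0) := by
        funext i; simp
      rw [e0]
      exact hδr _
    | succ s ih =>
      intro hs
      have hs' : s ≤ m + 1 := Nat.le_of_succ_le hs
      have hsm : s < m + 1 := hs
      have hqθ : ∀ i : Fin (m+1),
          (y0, (fun i : Fin (m+1) => if (i : ℕ) < s then yk else y0) i) ∈ θ := by
        intro i
        show (y0, if (i : ℕ) < s then yk else y0) ∈ θ
        by_cases hh : (i : ℕ) < s
        · rw [if_pos hh]; exact hyykθ
        · rw [if_neg hh]; exact hθr y0
      have hC := claimC ⟨s, hsm⟩ (fun i : Fin (m+1) => if (i : ℕ) < s then yk else y0) hqθ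
      beta_reduce at hC
      refine hδt _ _ _ (ih hs') ?_
      have g1 : (fun i : Fin (m+1) =>
            if i = ⟨s, hsm⟩ then y0 else if (i : ℕ) < s then yk else y0)
          = (fun i : Fin (m+1) => if (i : ℕ) < s then yk else y0) := by
        funext i
        by_cases hic : i = ⟨s, hsm⟩
        · rw [if_pos hic, hic]
          simp
        · rw [if_neg hic]
      have g2 : (fun i : Fin (m+1) =>
            if i = ⟨s, hsm⟩ then yk else if (i : ℕ) < s then yk else y0)
          = (fun i : Fin (m+1) => if (i : ℕ) < s + 1 then yk else y0) := by
        funext i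
        by_cases hic : i = ⟨s, hsm⟩
        · rw [if_pos hic, hic]
          simp
        · have hne : (i : ℕ) ≠ s := fun hh => hic (Fin.ext hh)
          rw [if_neg hic]
          by_cases hlt : (i : ℕ) < s
          · rw [if_pos hlt, if_pos (Nat.lt_succ_of_lt hlt)]
          · rw [if_neg hlt, if_neg (by omega)]
      rw [g1, g2] at hC
      exact hC
  have hD := claimD (m + 1) le_rfl
  have e2 : (fun i : Fin (m+1) => if (i : ℕ) < m + 1 then yk else y0)
      = (fun _ : Fin (m+1) => yk) := by
    funext i; rw [if_pos i.isLt]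
  rw [e2, hid, hid] at hD
  exact hD

end Stmt13Hard
/-- in a Taylor variety, if `R` is a 2-dimensional tolerance with
`M(θ,θ) ≤ R ≤ rect(θ,θ)` having `(δ,i)`-centrality for each `i ∈ 2`, then any
directional transitive closure `R^(∘_j)` has `(δ,i)`-centrality for each `i ∈ 2`. -/
theorem stmt13 {A : Type u} (σ : Signature) [Alg σ A] (hT : IsTaylorAlg σ A)
    (θ δ : Set (A × A)) (hθ : IsCongruence σ θ) (hδ : IsCongruence σ δ)
    (R : Set (Cube (Fin 2) A)) (hR : IsTolerance σ R)
    (hM : MRel σ (fun _ : Fin 2 => θ) ⊆ R)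
    (hrect : R ⊆ rectRel (fun _ : Fin 2 => θ))
    (hc : ∀ i : Fin 2, Centrality δ i R) (j : Fin 2) :
    ∀ i : Fin 2, Centrality δ i (dirClosure j R) := by
  intro i
  rintro ⟨γ, hγ, hcard⟩
  have hchain : Relation.TransGen
      (fun p q : Cube {x : Fin 2 // x ≠ j} A => (p, q) ∈ facesRel j R)
      (face j false γ) (face j true γ) := hγ
  have h2 : (2 : ℕ) ^ (Fintype.card (Fin 2) - 1) - 1 = 1 := by simp
  rw [h2, st13card] at hcard
  apply hcard
  rcases st13cases j i with hi | hi
  · subst hi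
    constructor
    · intro hF
      simpa using st13hard σ hT θ δ hθ hδ R hR.1 hM hrect hc i hchain false hF
    · intro hTr
      simpa using st13hard σ hT θ δ hθ hδ R hR.1 hM hrect hc i hchain true hTr
  · subst hi
    have hiff := st13easy δ j R (hc (st13other j)) hchain
    rw [st13face_eval, st13face_eval, st13face_eval, st13face_eval] at hiff
    constructor
    · intro hF
      rw [st13face_eval, st13face_eval] at hF ⊢
      rw [st13pt_swap, st13pt_swap] at hF ⊢
      exact hiff.mp hF
    · intro hTr
      rw [st13face_eval, st13face_eval] at hTr ⊢
      rw [st13pt_swap, st13pt_swap] at hTr ⊢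
      exact hiff.mpr hTr
end
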